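/- For every nonnegative integer n, ∑_{i=0}^{n} (2i+2)²·[Γ(n-i-1/2)/Γ(n-i+1)]·[Γ(n+i+3/2)/Γ(n+i+3)] = -2π. -/

import Mathlib

/-! Both Gamma quotients in the summand have the form `b k = Γ(k - 1/2) / Γ(k + 1)` (`gammaRatio`),
with `k = n - i` and `l = n + i + 2`, so the sum is half of the symmetric sum of `(l - k)² b_k b_l`
over `k + l = 2n + 2` (the middle term vanishes). Now `b (k + 1) = √π C_k / 4^k` with `C_k` the
Catalan numbers, and `b 0 = Γ(-1/2) = -2√π`. Since `(j - i)² = (i + j + 2)² - 4(i + 1)(j + 1)`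
and `(i + 1) C_i = binom(2i, i)`, the interior of the symmetric sum is a combination of the
Catalan recurrence and of `∑_{i+j=N} binom(2i, i) binom(2j, j) = 4^N`; the two boundary terms,
which carry `Γ(-1/2)`, cancel its Catalan part and leave `-4π`. -/

open Finset Real

theorem two_mul_sum_antidiagonal_fst_mul_of_symm {R : Type*} [CommSemiring R] {f : ℕ → ℕ → R}
    (hf : ∀ i j, f i j = f j i) (n : ℕ) :
    2 * ∑ p ∈ antidiagonal n, (p.1 : R) * f p.1 p.2 = n * ∑ p ∈ antidiagonal n, f p.1 p.2 := by
  have hswap : ∑ p ∈ antidiagonal n, (p.1 : R) * f p.1 p.2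
      = ∑ p ∈ antidiagonal n, (p.2 : R) * f p.1 p.2 := by
    rw [← Nat.sum_antidiagonal_swap (f := fun p => (p.1 : R) * f p.1 p.2)]
    exact sum_congr rfl fun p _ => by rw [hf]; rfl
  rw [two_mul]
  nth_rw 2 [hswap]
  rw [← sum_add_distrib, mul_sum]
  refine sum_congr rfl fun p hp => ?_
  rw [← add_mul, ← Nat.cast_add, HasAntidiagonal.mem_antidiagonal.mp hp]

theorem sum_antidiagonal_centralBinom_mul (n : ℕ) :
    ∑ p ∈ antidiagonal n, p.1.centralBinom * p.2.centralBinom = 4 ^ n := by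
  induction n with
  | zero => simp
  | succ n ih =>
    have hsymm := two_mul_sum_antidiagonal_fst_mul_of_symm (R := ℕ)
      (f := fun i j => i.centralBinom * j.centralBinom) (fun i j => mul_comm _ _)
    simp only [Nat.cast_id] at hsymm
    -- `(k + 1) binom(2k + 2, k + 1) = 2 (2k + 1) binom(2k, k)` links the first moments at `n + 1` and `n`
    have hshift : ∑ p ∈ antidiagonal (n + 1), p.1 * (p.1.centralBinom * p.2.centralBinom)
        = ∑ p ∈ antidiagonal n, 2 * (2 * p.1 + 1) * (p.1.centralBinom * p.2.centralBinom) := by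
      rw [Nat.sum_antidiagonal_succ]
      simp only [zero_mul, zero_add, ← mul_assoc, Nat.succ_mul_centralBinom_succ]
    have hexpand : ∑ p ∈ antidiagonal n, 2 * (2 * p.1 + 1) * (p.1.centralBinom * p.2.centralBinom)
        = 4 * ∑ p ∈ antidiagonal n, p.1 * (p.1.centralBinom * p.2.centralBinom)
          + 2 * ∑ p ∈ antidiagonal n, p.1.centralBinom * p.2.centralBinom := by
      rw [mul_sum, mul_sum, ← sum_add_distrib]
      exact sum_congr rfl fun _ _ => by ring
    have h0 := hsymm n
    have h1 := hsymm (n + 1)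
    rw [ih] at h0
    rw [hshift, hexpand, ih] at h1
    apply Nat.eq_of_mul_eq_mul_left n.succ_pos
    rw [pow_succ]
    linarith

theorem sum_antidiagonal_sq_sub_mul_catalan {R : Type*} [CommRing R] (N : ℕ) :
    ∑ p ∈ antidiagonal N, ((p.2 : R) - p.1) ^ 2 * catalan p.1 * catalan p.2
      = (N + 2) ^ 2 * catalan (N + 1) - 4 ^ (N + 1) := by
  have hterm : ∀ p ∈ antidiagonal N, ((p.2 : R) - p.1) ^ 2 * catalan p.1 * catalan p.2
      = (N + 2) ^ 2 * ((catalan p.1 * catalan p.2 : ℕ) : R)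
        - 4 * ((p.1.centralBinom * p.2.centralBinom : ℕ) : R) := by
    rintro ⟨i, j⟩ h
    rw [HasAntidiagonal.mem_antidiagonal] at h
    subst h
    simp only [← succ_mul_catalan_eq_centralBinom]
    push_cast
    ring
  rw [sum_congr rfl hterm, sum_sub_distrib, ← mul_sum, ← mul_sum, ← Nat.cast_sum, ← Nat.cast_sum,
    ← catalan_succ', sum_antidiagonal_centralBinom_mul]
  push_cast
  ring

theorem sum_antidiagonal_two_mul_of_symm {M : Type*} [AddCommMonoid M] {g : ℕ → ℕ → M}
    (hg : ∀ i j, g i j = g j i) (m : ℕ) :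
    ∑ p ∈ antidiagonal (2 * m), g p.1 p.2
      = g m m + 2 • ∑ i ∈ range m, g (m - 1 - i) (m + 1 + i) := by
  rw [Nat.sum_antidiagonal_eq_sum_range_succ g, show (2 * m).succ = m + (m + 1) by omega,
    sum_range_add, sum_range_succ', ← sum_range_reflect, two_nsmul]
  have hlow : ∀ i ∈ range m, g (m - 1 - i) (2 * m - (m - 1 - i)) = g (m - 1 - i) (m + 1 + i) :=
    fun i hi => by rw [show 2 * m - (m - 1 - i) = m + 1 + i by simp at hi; omega]
  have hhigh : ∀ i ∈ range m,
      g (m + (i + 1)) (2 * m - (m + (i + 1))) = g (m - 1 - i) (m + 1 + i) :=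
    fun i _ => by
      rw [hg, show 2 * m - (m + (i + 1)) = m - 1 - i by omega, ← add_assoc, add_right_comm]
  rw [sum_congr rfl hlow, sum_congr rfl hhigh, show 2 * m - (m + 0) = m by omega, add_zero]
  abel

theorem Gamma_nat_add_half_div_Gamma_nat_add_one (k : ℕ) :
    Gamma (k + 1 / 2) / Gamma (k + 1) = √π * k.centralBinom / 4 ^ k := by
  induction k with
  | zero => simpa using Gamma_one_half_eq
  | succ k ih =>
    have hrec : ((k : ℝ) + 1) * (k + 1).centralBinom = 2 * (2 * k + 1) * k.centralBinom := by
      exact_mod_cast Nat.succ_mul_centralBinom_succ k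
    have hk : (k : ℝ) + 1 / 2 ≠ 0 := by positivity
    rw [Nat.cast_succ, add_right_comm, Gamma_add_one hk, Gamma_add_one (by positivity), pow_succ,
      mul_div_mul_comm, ih]
    field_simp
    linear_combination -2 * hrec

noncomputable def gammaRatio (k : ℕ) : ℝ := Gamma (k - 1 / 2) / Gamma (k + 1)

theorem gammaRatio_zero : gammaRatio 0 = -2 * √π := by
  have h := Gamma_add_one (s := -(1 / 2)) (by norm_num)
  rw [show -(1 / 2 : ℝ) + 1 = 1 / 2 by norm_num, Gamma_one_half_eq] at h
  simp only [gammaRatio, CharP.cast_eq_zero, zero_sub, zero_add, Gamma_one, div_one]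
  linarith

theorem gammaRatio_succ (k : ℕ) : gammaRatio (k + 1) = √π * catalan k / 4 ^ k := by
  have h := Gamma_nat_add_half_div_Gamma_nat_add_one k
  rw [← succ_mul_catalan_eq_centralBinom] at h
  rw [gammaRatio, Nat.cast_succ, show (k : ℝ) + 1 - 1 / 2 = k + 1 / 2 by ring,
    Gamma_add_one (by positivity)]
  rw [div_eq_div_iff (by positivity) (by positivity)] at h ⊢
  push_cast at h
  linear_combination h

theorem sum_antidiagonal_sq_sub_mul_gammaRatio (N : ℕ) :
    ∑ p ∈ antidiagonal (N + 2), ((p.2 : ℝ) - p.1) ^ 2 * gammaRatio p.1 * gammaRatio p.2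
      = -4 * π := by
  have hinner : ∀ p ∈ antidiagonal N,
      (((p.2 + 1 : ℕ) : ℝ) - (p.1 + 1 : ℕ)) ^ 2 * gammaRatio (p.1 + 1) * gammaRatio (p.2 + 1)
        = π / 4 ^ N * (((p.2 : ℝ) - p.1) ^ 2 * catalan p.1 * catalan p.2) := by
    rintro ⟨i, j⟩ h
    rw [HasAntidiagonal.mem_antidiagonal] at h
    subst h
    simp only [gammaRatio_succ, pow_add]
    push_cast
    field_simp
    rw [sq_sqrt pi_pos.le]
    ring
  rw [Nat.sum_antidiagonal_succ, Nat.sum_antidiagonal_succ', sum_congr rfl hinner, ← mul_sum,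
    sum_antidiagonal_sq_sub_mul_catalan, gammaRatio_zero, gammaRatio_succ]
  push_cast
  field_simp
  rw [sq_sqrt pi_pos.le]
  ring

theorem gamma_sum_identity_3 (n : ℕ) :
    ∑ i ∈ Finset.range (n + 1),
      (2 * (i : ℝ) + 2) ^ 2 *
        (Real.Gamma ((n : ℝ) - i - 1/2) / Real.Gamma ((n : ℝ) - i + 1)) *
          (Real.Gamma ((n : ℝ) + i + 3/2) / Real.Gamma ((n : ℝ) + i + 3)) =
      -2 * π := by
  have key := sum_antidiagonal_sq_sub_mul_gammaRatio (2 * n)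
  rw [show 2 * n + 2 = 2 * (n + 1) by ring, sum_antidiagonal_two_mul_of_symm
    (g := fun k l => ((l : ℝ) - k) ^ 2 * gammaRatio k * gammaRatio l) (fun k l => by ring)] at key
  have hterm : ∀ i ∈ range (n + 1), (2 * (i : ℝ) + 2) ^ 2 *
        (Real.Gamma ((n : ℝ) - i - 1/2) / Real.Gamma ((n : ℝ) - i + 1)) *
          (Real.Gamma ((n : ℝ) + i + 3/2) / Real.Gamma ((n : ℝ) + i + 3))
      = (((n + 1 + 1 + i : ℕ) : ℝ) - (n + 1 - 1 - i : ℕ)) ^ 2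
          * gammaRatio (n + 1 - 1 - i) * gammaRatio (n + 1 + 1 + i) := by
    intro i hi
    rw [show n + 1 - 1 - i = n - i by omega, gammaRatio, gammaRatio,
      Nat.cast_sub (mem_range_succ_iff.mp hi)]
    push_cast
    ring_nf
  rw [sum_congr rfl hterm]
  simp only [sub_self, zero_pow two_ne_zero, zero_mul, zero_add, nsmul_eq_mul, Nat.cast_ofNat]
    at key
  linarith
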